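/- arXiv:1807.11523 — 2 statements merged into one kernel-verified Lean document; each statement's English description precedes it below -/
import Mathlib

section
/- Let (H_i)_{i∈ℕ} be a family of BF-monoids all having the same elasticity r = ρ(H_i). Then the coproduct H = ∐_{i=1}^{∞} H_i is fully elastic: for every rational q with 1 < q < ρ(H) there exists a ∈ H with ρ(a) = q. -/
open Filter Topology

/-- The set of factorization lengths of `a`: the set of all `k` such that `a` is a
product of `k` atoms (irreducibles); by convention it is `{0}` for units. -/
noncomputable def lengthSet (H : Type*) [CommMonoid H] (a : H) : Set ℕ :=
  open Classical in
  if IsUnit a then {0}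
  else {k | ∃ f : Fin k → H, (∀ i, Irreducible (f i)) ∧ a = ∏ i, f i}

/-- The elasticity `ρ(a) = max L(a) / min L(a)` of an element of a BF-monoid,
with `ρ(a) = 1` for units. -/
noncomputable def elasticity (H : Type*) [CommMonoid H] (a : H) : ℝ :=
  open Classical in
  if IsUnit a then 1
  else ((sSup (lengthSet H a) : ℕ) : ℝ) / ((sInf (lengthSet H a) : ℕ) : ℝ)

/-- The elasticity `ρ(H) = sup {ρ(a) : a ∈ H} ∈ ℝ≥1 ∪ {∞}` of the monoid `H`. -/
noncomputable def monoidElasticity (H : Type*) [CommMonoid H] : EReal :=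
  ⨆ a : H, ((elasticity H a : ℝ) : EReal)

/-- The set `R̄(H)` of asymptotic elasticities `ρ̄(a) = lim_{n → ∞} ρ(aⁿ)`
of nonunits `a ∈ H` (membership requires the limit to exist). -/
def asympSet (H : Type*) [CommMonoid H] : Set EReal :=
  {r | ∃ a : H, ¬ IsUnit a ∧
    Tendsto (fun n : ℕ => ((elasticity H (a ^ n) : ℝ) : EReal)) atTop (nhds r)}

/-- `H` is locally finitely generated: for every `a ∈ H` there are only finitely many
atoms, up to associates, dividing some power of `a`. -/
def LocallyFinitelyGenerated (H : Type*) [CommMonoid H] : Prop :=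
  ∀ a : H, {u : Associates H | Irreducible u ∧ ∃ n : ℕ, u ∣ Associates.mk (a ^ n)}.Finite

/-- `H` is a BF-monoid: atomic (every nonunit has a factorization into atoms) and
all sets of lengths are finite. -/
def IsBFMonoid (H : Type*) [CommMonoid H] : Prop :=
  (∀ a : H, ¬ IsUnit a → (lengthSet H a).Nonempty) ∧ ∀ a : H, (lengthSet H a).Finite

/-- `(k, ℓ) ≠ (0,0)` is a nice pair with respect to `(a, b)` if
`max L((aᵏbˡ)ᵗ) = t · max L(aᵏbˡ)` and `min L((aᵏbˡ)ᵗ) = t · min L(aᵏbˡ)` for all `t ∈ ℕ`. -/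
def IsNicePair (H : Type*) [CommMonoid H] (a b : H) (k ℓ : ℕ) : Prop :=
  ¬ (k = 0 ∧ ℓ = 0) ∧ ∀ t : ℕ, 0 < t →
    sSup (lengthSet H ((a ^ k * b ^ ℓ) ^ t)) = t * sSup (lengthSet H (a ^ k * b ^ ℓ)) ∧
    sInf (lengthSet H ((a ^ k * b ^ ℓ) ^ t)) = t * sInf (lengthSet H (a ^ k * b ^ ℓ))

/-- `H` is strongly primary: `H ≠ H^×` and for every nonunit `a` there is `n ∈ ℕ`
such that every product of `n` nonunits of `H` is divisible by `a`. -/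
def StronglyPrimary (H : Type*) [CommMonoid H] : Prop :=
  (∃ a : H, ¬ IsUnit a) ∧ ∀ a : H, ¬ IsUnit a → ∃ n : ℕ, 0 < n ∧
    ∀ f : Fin n → H, (∀ i, ¬ IsUnit (f i)) → a ∣ ∏ i, f i

/-- `H` is half-factorial: atomic and `|L(a)| = 1` for every `a ∈ H`. -/
def IsHalfFactorial (H : Type*) [CommMonoid H] : Prop :=
  ∀ a : H, ∃ k : ℕ, lengthSet H a = {k}


/-- The coproduct `∐_{i ∈ ℕ} H i`: the submonoid of the direct product consisting of
families with all but finitely many components equal to `1`. -/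
def coprodSubmonoid (H : ℕ → Type*) [∀ i, CancelCommMonoid (H i)] :
    Submonoid (∀ i, H i) where
  carrier := {f : ∀ i, H i | {i : ℕ | f i ≠ 1}.Finite}
  one_mem' := by simp
  mul_mem' := by
    intro f g hf hg
    refine (Set.Finite.union hf hg).subset ?_
    intro i hi
    by_contra hcon
    simp only [Set.mem_union, Set.mem_setOf_eq, not_or, not_not, ne_eq] at hcon
    exact hi (by show f i * g i = 1; rw [hcon.1, hcon.2, one_mul])

noncomputable instance (H : ℕ → Type*) [∀ i, CancelCommMonoid (H i)] :
    CancelCommMonoid (coprodSubmonoid H) :=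
  Function.Injective.cancelCommMonoid (Subtype.val : coprodSubmonoid H → ∀ i, H i)
    Subtype.coe_injective rfl (fun _ _ => rfl) (fun _ _ => rfl)


/-!
The lengths of an element `c` of the coproduct add up coordinatewise: `max L(c)` and `min L(c)`
are the sums of `max L(cᵢ)` and `min L(cᵢ)`. So `ρ(c)` is a mediant of the `ρ(cᵢ)`, and
`q < ρ(H)` yields a coordinate monoid, hence (all `ρ(Hᵢ)` being equal) every `Hᵢ`, with an
element `aᵢ` such that `q < ρ(aᵢ)`. Write `q = u / v`. The defects `v max L(aᵢ) - u min L(aᵢ)`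
are positive, and by Erdős–Ginzburg–Ziv some `u - v` of them add up to `(u - v) s`. Putting
these `aᵢ` and `s` atoms into pairwise distinct coordinates gives an element whose maximal and
minimal lengths are in ratio exactly `u / v`.
-/

open Finset

section LengthSet

variable {M : Type*} [CommMonoid M] {a b : M}

theorem lengthSet_of_isUnit (h : IsUnit a) : lengthSet M a = {0} := if_pos h

theorem lengthSet_of_not_isUnit (h : ¬ IsUnit a) :
    lengthSet M a = {k | ∃ f : Fin k → M, (∀ i, Irreducible (f i)) ∧ a = ∏ i, f i} :=
  if_neg h

theorem zero_notMem_lengthSet (h : ¬ IsUnit a) : 0 ∉ lengthSet M a := by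
  rw [lengthSet_of_not_isUnit h]
  rintro ⟨f, -, rfl⟩
  exact h (by simp)

theorem lengthSet_irreducible (h : Irreducible a) : lengthSet M a = {1} := by
  ext k
  rw [lengthSet_of_not_isUnit h.not_isUnit, Set.mem_singleton_iff]
  constructor
  · rintro ⟨f, hf, rfl⟩
    match k, f, hf, h with
    | 0, _, _, h => simp at h
    | 1, _, _, _ => rfl
    | _ + 2, f, hf, h =>
      rw [Fin.prod_univ_succ] at h
      refine ((h.isUnit_or_isUnit rfl).elim (hf 0).not_isUnit fun hu => ?_).elim
      exact (hf 1).not_isUnit (IsUnit.prod_univ_iff.1 hu 0)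
  · rintro rfl
    exact ⟨fun _ => a, fun _ => h, by simp⟩

theorem lengthSet_subset_lengthSet_unit_mul {u : M} (hu : IsUnit u) (a : M) :
    lengthSet M a ⊆ lengthSet M (u * a) := by
  by_cases ha : IsUnit a
  · rw [lengthSet_of_isUnit ha, lengthSet_of_isUnit (hu.mul ha)]
  intro k hk
  obtain ⟨k, rfl⟩ := Nat.exists_eq_succ_of_ne_zero fun h => zero_notMem_lengthSet ha (h ▸ hk)
  rw [lengthSet_of_not_isUnit ha] at hk
  obtain ⟨f, hf, rfl⟩ := hk
  rw [lengthSet_of_not_isUnit fun h => ha (isUnit_of_mul_isUnit_right h)]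
  refine ⟨Fin.cons (u * f 0) (Fin.tail f),
    Fin.cases ((irreducible_isUnit_mul hu).2 (hf 0)) fun i => hf i.succ, ?_⟩
  simp only [Fin.prod_univ_succ, Fin.cons_zero, Fin.cons_succ, Fin.tail, mul_assoc]

theorem lengthSet_unit_mul {u : M} (hu : IsUnit u) (a : M) :
    lengthSet M (u * a) = lengthSet M a := by
  refine (lengthSet_subset_lengthSet_unit_mul hu a).antisymm' ?_
  simpa [← mul_assoc] using lengthSet_subset_lengthSet_unit_mul hu.unit⁻¹.isUnit (u * a)

theorem add_mem_lengthSet_mul {k l : ℕ} (ha : k ∈ lengthSet M a) (hb : l ∈ lengthSet M b) :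
    k + l ∈ lengthSet M (a * b) := by
  by_cases hau : IsUnit a
  · rw [lengthSet_of_isUnit hau, Set.mem_singleton_iff] at ha
    rwa [ha, zero_add, lengthSet_unit_mul hau]
  by_cases hbu : IsUnit b
  · rw [lengthSet_of_isUnit hbu, Set.mem_singleton_iff] at hb
    rwa [hb, add_zero, mul_comm, lengthSet_unit_mul hbu]
  rw [lengthSet_of_not_isUnit hau] at ha
  rw [lengthSet_of_not_isUnit hbu] at hb
  obtain ⟨f, hf, rfl⟩ := ha
  obtain ⟨g, hg, rfl⟩ := hb
  rw [lengthSet_of_not_isUnit fun h => hau (isUnit_of_mul_isUnit_left h)]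
  refine ⟨Fin.append f g, Fin.addCases (by simpa using hf) (by simpa using hg), ?_⟩
  simp [Fin.prod_univ_add]

theorem sum_mem_lengthSet_prod {ι : Type*} (s : Finset ι) (f : ι → M) (κ : ι → ℕ)
    (h : ∀ i ∈ s, κ i ∈ lengthSet M (f i)) : ∑ i ∈ s, κ i ∈ lengthSet M (∏ i ∈ s, f i) := by
  classical
  induction s using Finset.induction_on with
  | empty => simp [lengthSet_of_isUnit isUnit_one]
  | insert i s hi ih =>
    rw [sum_insert hi, prod_insert hi]
    exact add_mem_lengthSet_mul (h i (mem_insert_self i s))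
      (ih fun j hj => h j (mem_insert_of_mem hj))

theorem card_mem_lengthSet_prod {ι : Type*} (s : Finset ι) (f : ι → M)
    (h : ∀ i ∈ s, Irreducible (f i)) : #s ∈ lengthSet M (∏ i ∈ s, f i) := by
  simpa using sum_mem_lengthSet_prod s f 1 fun i hi => by simp [lengthSet_irreducible (h i hi)]

theorem lengthSet_subset_lengthSet_map {N : Type*} [CommMonoid N] (φ : M →* N)
    (hφ : ∀ x, Irreducible x → Irreducible (φ x)) (a : M) :
    lengthSet M a ⊆ lengthSet N (φ a) := by
  by_cases ha : IsUnit a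
  · rw [lengthSet_of_isUnit ha, lengthSet_of_isUnit (ha.map φ)]
  rw [lengthSet_of_not_isUnit ha]
  rintro k ⟨f, hf, rfl⟩
  simpa [map_prod] using card_mem_lengthSet_prod univ (φ ∘ f) fun i _ => hφ _ (hf i)

end LengthSet

section Elasticity

variable {M : Type*} [CommMonoid M] {a : M}

theorem not_isUnit_of_lt_elasticity {t : ℝ} (ht : 1 ≤ t) (h : t < elasticity M a) :
    ¬ IsUnit a := fun hu => by
  rw [elasticity, if_pos hu] at h
  linarith

theorem lt_monoidElasticity_iff {t : ℝ} :
    (t : EReal) < monoidElasticity M ↔ ∃ a, t < elasticity M a := by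
  simp [monoidElasticity, lt_iSup_iff]

namespace IsBFMonoid

theorem lengthSet_nonempty (hM : IsBFMonoid M) (a : M) : (lengthSet M a).Nonempty := by
  by_cases ha : IsUnit a
  · simp [lengthSet_of_isUnit ha]
  · exact hM.1 a ha

theorem sInf_mem_lengthSet (hM : IsBFMonoid M) (a : M) : sInf (lengthSet M a) ∈ lengthSet M a :=
  Nat.sInf_mem (hM.lengthSet_nonempty a)

theorem sSup_mem_lengthSet (hM : IsBFMonoid M) (a : M) : sSup (lengthSet M a) ∈ lengthSet M a :=
  Nat.sSup_mem (hM.lengthSet_nonempty a) (hM.2 a).bddAbove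

theorem sInf_pos (hM : IsBFMonoid M) (ha : ¬ IsUnit a) : 0 < sInf (lengthSet M a) :=
  Nat.pos_of_ne_zero fun h => zero_notMem_lengthSet ha (h ▸ hM.sInf_mem_lengthSet a)

theorem exists_irreducible (hM : IsBFMonoid M) (ha : ¬ IsUnit a) : ∃ w : M, Irreducible w := by
  obtain ⟨k, hk⟩ := hM.1 a ha
  have hk0 : 0 < k := Nat.pos_of_ne_zero fun h => zero_notMem_lengthSet ha (h ▸ hk)
  rw [lengthSet_of_not_isUnit ha] at hk
  obtain ⟨f, hf, -⟩ := hk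
  exact ⟨f ⟨0, hk0⟩, hf _⟩

theorem lt_elasticity_iff (hM : IsBFMonoid M) (ha : ¬ IsUnit a) {t : ℝ} :
    t < elasticity M a ↔ t * sInf (lengthSet M a) < sSup (lengthSet M a) := by
  rw [elasticity, if_neg ha, lt_div_iff₀ (by exact_mod_cast hM.sInf_pos ha)]

theorem elasticity_eq_iff (hM : IsBFMonoid M) (ha : ¬ IsUnit a) {t : ℝ} :
    elasticity M a = t ↔ ((sSup (lengthSet M a) : ℕ) : ℝ) = t * sInf (lengthSet M a) := by
  rw [elasticity, if_neg ha, div_eq_iff (by exact_mod_cast (hM.sInf_pos ha).ne')]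

end IsBFMonoid

end Elasticity

section Coprod

variable {H : ℕ → Type*} [∀ i, CancelCommMonoid (H i)]

def coprodEval (j : ℕ) : coprodSubmonoid H →* H j where
  toFun c := c.1 j
  map_one' := rfl
  map_mul' _ _ := rfl

def coprodSingle (j : ℕ) : H j →* coprodSubmonoid H where
  toFun x := ⟨Pi.mulSingle j x, (Set.finite_singleton j).subset fun _ hi =>
    by_contra fun hij => hi (Pi.mulSingle_eq_of_ne hij x)⟩
  map_one' := Subtype.ext (Pi.mulSingle_one j)
  map_mul' x y := Subtype.ext (Pi.mulSingle_mul j x y)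

def coprodUpdate (c : coprodSubmonoid H) (i : ℕ) (x : H i) : coprodSubmonoid H :=
  ⟨Function.update c.1 i x, (c.2.union (Set.finite_singleton i)).subset fun j hj => by
    by_cases hji : j = i
    · exact Or.inr hji
    · exact Or.inl (by simpa [Function.update_of_ne hji] using hj)⟩

theorem coprod_prod_apply {ι : Type*} (s : Finset ι) (f : ι → coprodSubmonoid H) (j : ℕ) :
    (∏ i ∈ s, f i).1 j = ∏ i ∈ s, (f i).1 j :=
  map_prod (coprodEval j) f s

theorem prod_coprodSingle_apply (S : Finset ℕ) (g : ∀ i, H i) (j : ℕ) :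
    (∏ i ∈ S, coprodSingle i (g i)).1 j = if j ∈ S then g j else 1 := by
  rw [coprod_prod_apply]
  exact prod_pi_mulSingle j g S

theorem prod_coprodSingle (c : coprodSubmonoid H) {S : Finset ℕ} (hS : ∀ i ∉ S, c.1 i = 1) :
    ∏ i ∈ S, coprodSingle i (c.1 i) = c := by
  refine Subtype.ext (funext fun j => ?_)
  rw [prod_coprodSingle_apply]
  split_ifs with hj
  · rfl
  · exact (hS j hj).symm

theorem coprod_exists_support (c : coprodSubmonoid H) : ∃ S : Finset ℕ, ∀ i ∉ S, c.1 i = 1 :=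
  ⟨c.2.toFinset, fun _ hi => of_not_not fun h => hi (c.2.mem_toFinset.2 h)⟩

theorem coprod_isUnit_iff (c : coprodSubmonoid H) : IsUnit c ↔ ∀ i, IsUnit (c.1 i) := by
  refine ⟨fun h i => h.map (coprodEval i), fun h => ?_⟩
  obtain ⟨S, hS⟩ := coprod_exists_support c
  rw [← prod_coprodSingle c hS]
  exact IsUnit.prod_iff.2 fun i _ => (h i).map (coprodSingle i)

theorem isUnit_coprodSingle_iff {j : ℕ} {x : H j} : IsUnit (coprodSingle j x) ↔ IsUnit x :=
  ⟨fun h => by simpa [coprodEval, coprodSingle] using h.map (coprodEval j), fun h => h.map _⟩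

theorem coprodSingle_mul_coprodUpdate (c : coprodSubmonoid H) (i : ℕ) (x y : H i) :
    coprodSingle i x * coprodUpdate c i y = coprodUpdate c i (x * y) := by
  refine Subtype.ext (funext fun j => ?_)
  show Pi.mulSingle i x j * Function.update c.1 i y j = Function.update c.1 i (x * y) j
  by_cases hji : j = i
  · subst hji; simp
  · simp [hji]

theorem coprodUpdate_self (c : coprodSubmonoid H) (i : ℕ) : coprodUpdate c i (c.1 i) = c :=
  Subtype.ext (Function.update_eq_self i c.1)

theorem irreducible_coprodSingle {j : ℕ} {x : H j} (hx : Irreducible x) :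
    Irreducible (coprodSingle j x) := by
  refine ⟨mt isUnit_coprodSingle_iff.1 hx.not_isUnit, fun a b hab => ?_⟩
  have hcomp : ∀ i, Pi.mulSingle j x i = a.1 i * b.1 i := fun i => congrArg (·.1 i) hab
  have hother : ∀ i ≠ j, a.1 i * b.1 i = 1 := fun i hi => by
    rw [← hcomp, Pi.mulSingle_eq_of_ne hi]
  simp only [coprod_isUnit_iff]
  rcases hx.isUnit_or_isUnit (by simpa using hcomp j) with h | h
  · refine Or.inl fun i => ?_
    by_cases hi : i = j
    · exact hi ▸ h
    · exact IsUnit.of_mul_eq_one _ (hother i hi)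
  · refine Or.inr fun i => ?_
    by_cases hi : i = j
    · exact hi ▸ h
    · exact IsUnit.of_mul_eq_one_right _ (hother i hi)

theorem exists_irreducible_apply_of_irreducible {c : coprodSubmonoid H} (hc : Irreducible c) :
    ∃ i, Irreducible (c.1 i) ∧ ∀ j ≠ i, IsUnit (c.1 j) := by
  obtain ⟨i, hi⟩ : ∃ i, ¬ IsUnit (c.1 i) := by
    simpa [coprod_isUnit_iff] using hc.not_isUnit
  have hsplit : ∀ x y, c.1 i = x * y → c = coprodSingle i x * coprodUpdate c i y := by
    intro x y hxy
    rw [coprodSingle_mul_coprodUpdate, ← hxy, coprodUpdate_self]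
  refine ⟨i, ⟨hi, fun x y hxy => ?_⟩, fun j hji => ?_⟩
  · refine (hc.isUnit_or_isUnit (hsplit x y hxy)).imp isUnit_coprodSingle_iff.1 fun h => ?_
    simpa [coprodEval, coprodUpdate] using h.map (coprodEval i)
  · have h := (hc.isUnit_or_isUnit (hsplit _ 1 (mul_one _).symm)).resolve_left
      (mt isUnit_coprodSingle_iff.1 hi)
    simpa [coprodEval, coprodUpdate, hji] using h.map (coprodEval j)

end Coprod

section CoprodLengths

variable {H : ℕ → Type*} [∀ i, CancelCommMonoid (H i)] {c : coprodSubmonoid H} {S : Finset ℕ}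

theorem exists_mem_lengthSet_apply_of_mem_lengthSet (hS : ∀ i ∉ S, c.1 i = 1) {k : ℕ}
    (hk : k ∈ lengthSet (coprodSubmonoid H) c) :
    ∃ κ : ℕ → ℕ, (∀ i, κ i ∈ lengthSet (H i) (c.1 i)) ∧ k = ∑ i ∈ S, κ i := by
  classical
  by_cases hu : IsUnit c
  · rw [lengthSet_of_isUnit hu, Set.mem_singleton_iff] at hk
    refine ⟨0, fun i => ?_, by simp [hk]⟩
    simp [lengthSet_of_isUnit ((coprod_isUnit_iff c).1 hu i)]
  rw [lengthSet_of_not_isUnit hu] at hk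
  obtain ⟨f, hf, rfl⟩ := hk
  choose idx hidx hunit using fun t => exists_irreducible_apply_of_irreducible (hf t)
  have hidxS : ∀ t, idx t ∈ S := fun t => of_not_not fun h => (hidx t).not_isUnit <|
    isUnit_of_dvd_one <| by
      simpa [← hS _ h, coprod_prod_apply] using
        dvd_prod_of_mem (fun s => (f s).1 (idx t)) (mem_univ t)
  -- `κ i` counts the atoms of the factorization that live in coordinate `i`
  refine ⟨fun i => #{t | idx t = i}, fun i => ?_, ?_⟩
  · rw [coprod_prod_apply, ← prod_filter_mul_prod_filter_not univ (fun t => idx t = i), mul_comm,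
      lengthSet_unit_mul (IsUnit.prod_iff.2 fun t ht => hunit t i (Ne.symm (mem_filter.1 ht).2))]
    exact card_mem_lengthSet_prod _ _ fun t ht => (mem_filter.1 ht).2 ▸ hidx t
  · simpa using card_eq_sum_card_fiberwise (s := univ) fun t _ => hidxS t

theorem sum_mem_lengthSet_of_mem_lengthSet_apply (hS : ∀ i ∉ S, c.1 i = 1) {κ : ℕ → ℕ}
    (hκ : ∀ i ∈ S, κ i ∈ lengthSet (H i) (c.1 i)) :
    ∑ i ∈ S, κ i ∈ lengthSet (coprodSubmonoid H) c := by
  rw [← prod_coprodSingle c hS]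
  exact sum_mem_lengthSet_prod S _ κ fun i hi =>
    lengthSet_subset_lengthSet_map (coprodSingle i) (fun _ => irreducible_coprodSingle) _ (hκ i hi)

variable (hbf : ∀ i, IsBFMonoid (H i))
include hbf

theorem le_sum_sSup_of_mem_lengthSet (hS : ∀ i ∉ S, c.1 i = 1) {k : ℕ}
    (hk : k ∈ lengthSet (coprodSubmonoid H) c) : k ≤ ∑ i ∈ S, sSup (lengthSet (H i) (c.1 i)) := by
  obtain ⟨κ, hκ, rfl⟩ := exists_mem_lengthSet_apply_of_mem_lengthSet hS hk
  exact sum_le_sum fun i _ => le_csSup ((hbf i).2 _).bddAbove (hκ i)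

theorem sSup_lengthSet_coprod (hS : ∀ i ∉ S, c.1 i = 1) :
    sSup (lengthSet (coprodSubmonoid H) c) = ∑ i ∈ S, sSup (lengthSet (H i) (c.1 i)) :=
  IsGreatest.csSup_eq ⟨sum_mem_lengthSet_of_mem_lengthSet_apply hS fun i _ =>
    (hbf i).sSup_mem_lengthSet _, fun _ => le_sum_sSup_of_mem_lengthSet hbf hS⟩

theorem sInf_lengthSet_coprod (hS : ∀ i ∉ S, c.1 i = 1) :
    sInf (lengthSet (coprodSubmonoid H) c) = ∑ i ∈ S, sInf (lengthSet (H i) (c.1 i)) := by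
  refine IsLeast.csInf_eq ⟨sum_mem_lengthSet_of_mem_lengthSet_apply hS fun i _ =>
    (hbf i).sInf_mem_lengthSet _, fun k hk => ?_⟩
  obtain ⟨κ, hκ, rfl⟩ := exists_mem_lengthSet_apply_of_mem_lengthSet hS hk
  exact sum_le_sum fun i _ => Nat.sInf_le (hκ i)

theorem isBFMonoid_coprod : IsBFMonoid (coprodSubmonoid H) := by
  refine ⟨fun c _ => ?_, fun c => ?_⟩ <;> obtain ⟨S, hS⟩ := coprod_exists_support c
  · exact ⟨_, sum_mem_lengthSet_of_mem_lengthSet_apply hS fun i _ =>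
      (hbf i).sInf_mem_lengthSet _⟩
  · exact (Set.finite_Iic _).subset fun _ => le_sum_sSup_of_mem_lengthSet hbf hS

end CoprodLengths

theorem exists_lt_elasticity_apply {H : ℕ → Type*} [∀ i, CancelCommMonoid (H i)]
    (hbf : ∀ i, IsBFMonoid (H i)) {t : ℝ} (ht : 1 ≤ t) {c : coprodSubmonoid H}
    (hc : t < elasticity (coprodSubmonoid H) c) : ∃ i, t < elasticity (H i) (c.1 i) := by
  obtain ⟨S, hS⟩ := coprod_exists_support c
  rw [(isBFMonoid_coprod hbf).lt_elasticity_iff (not_isUnit_of_lt_elasticity ht hc),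
    sSup_lengthSet_coprod hbf hS, sInf_lengthSet_coprod hbf hS] at hc
  push_cast at hc
  rw [mul_sum] at hc
  obtain ⟨i, -, hi⟩ := exists_lt_of_sum_lt hc
  have hiu : ¬ IsUnit (c.1 i) := fun h => by simp [lengthSet_of_isUnit h] at hi
  exact ⟨i, ((hbf i).lt_elasticity_iff hiu).2 hi⟩

theorem exists_sum_add_eq_mul_sum_add {q : ℚ} (hq : 1 < q) (M m : ℕ → ℕ)
    (h : ∀ j, q * m j < M j) :
    ∃ T : Finset ℕ, T.Nonempty ∧ ∃ s : ℕ,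
      ((∑ j ∈ T, M j + s : ℕ) : ℚ) = q * ((∑ j ∈ T, m j + s : ℕ) : ℚ) := by
  have hden : (0 : ℚ) < q.den := by exact_mod_cast q.den_pos
  have hnum : (q.num : ℚ) = q * q.den := q.mul_den_eq_num.symm
  have hlt : (q.den : ℤ) < q.num := by
    have : (q.den : ℚ) < q.num := by rw [hnum]; exact lt_mul_of_one_lt_left hden hq
    exact_mod_cast this
  obtain ⟨n, hn⟩ : ∃ n : ℕ, q.num - q.den = n := Int.eq_ofNat_of_zero_le (by omega)
  have hnpos : 0 < n := by omega
  obtain ⟨T, -, hTcard, s, hs⟩ := Int.erdos_ginzburg_ziv (n := n) (s := range (2 * n - 1))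
    (fun j => q.den * M j - q.num * m j) (by simp)
  have hd : ∀ j, 0 < (q.den * M j - q.num * m j : ℤ) := fun j => by
    have : (q.num : ℚ) * m j < q.den * M j := by
      rw [hnum, mul_right_comm, mul_comm (q.den : ℚ)]
      exact mul_lt_mul_of_pos_right (h j) hden
    have : (q.num * m j : ℤ) < q.den * M j := by exact_mod_cast this
    omega
  have hs0 : 0 ≤ s := by
    refine nonneg_of_mul_nonneg_right ?_ (by exact_mod_cast hnpos : (0 : ℤ) < n)
    rw [← hs]
    exact sum_nonneg fun j _ => (hd j).le
  lift s to ℕ using hs0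
  refine ⟨T, card_pos.1 (hTcard ▸ hnpos), s, ?_⟩
  have hsQ := congrArg (Int.cast : ℤ → ℚ) hs
  have hnQ := congrArg (Int.cast : ℤ → ℚ) hn
  push_cast at hsQ hnQ ⊢
  rw [hnum] at hsQ hnQ
  rw [sum_sub_distrib, ← mul_sum, ← mul_sum, ← hnQ] at hsQ
  refine mul_left_cancel₀ hden.ne' ?_
  linear_combination hsQ

theorem exists_elasticity_eq_of_forall_exists_lt {H : ℕ → Type*} [∀ i, CancelCommMonoid (H i)]
    (hbf : ∀ i, IsBFMonoid (H i)) {q : ℚ} (hq : 1 < q)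
    (ha : ∀ j, ∃ a : H j, (q : ℝ) < elasticity (H j) a) :
    ∃ c : coprodSubmonoid H, elasticity (coprodSubmonoid H) c = q := by
  classical
  choose a ha using ha
  have hau : ∀ j, ¬ IsUnit (a j) := fun j =>
    not_isUnit_of_lt_elasticity (by exact_mod_cast hq.le) (ha j)
  choose w hw using fun j => (hbf j).exists_irreducible (hau j)
  obtain ⟨T, ⟨j₀, hj₀⟩, s, hs⟩ := exists_sum_add_eq_mul_sum_add hq
    (fun j => sSup (lengthSet (H j) (a j))) (fun j => sInf (lengthSet (H j) (a j)))
    fun j => by exact_mod_cast ((hbf j).lt_elasticity_iff (hau j)).1 (ha j)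
  set N := T.sup id + 1
  set A := Ico N (N + s)
  have hTA : Disjoint T A := disjoint_of_subset_left (subset_range_sup_succ T)
    (by rw [range_eq_Ico]; exact Ico_disjoint_Ico_consecutive 0 N (N + s))
  set c := ∏ i ∈ T ∪ A, coprodSingle i (T.piecewise a w i)
  have hS : ∀ i ∉ T ∪ A, c.1 i = 1 := fun i hi => by rw [prod_coprodSingle_apply, if_neg hi]
  have hc : ∀ i ∈ T ∪ A, c.1 i = T.piecewise a w i := fun i hi => by
    rw [prod_coprodSingle_apply, if_pos hi]
  have hcT : ∀ i ∈ T, c.1 i = a i := fun i hi => by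
    rw [hc i (mem_union_left _ hi), piecewise_eq_of_mem _ _ _ hi]
  have hsumT (f : Set ℕ → ℕ) :
      ∑ i ∈ T, f (lengthSet (H i) (c.1 i)) = ∑ i ∈ T, f (lengthSet (H i) (a i)) :=
    sum_congr rfl fun i hi => by rw [hcT i hi]
  have hsumA (f : Set ℕ → ℕ) (hf : f {1} = 1) : ∑ i ∈ A, f (lengthSet (H i) (c.1 i)) = s := by
    rw [sum_congr rfl fun i hi => by
      rw [hc i (mem_union_right _ hi), piecewise_eq_of_notMem _ _ _ (disjoint_right.1 hTA hi),
        lengthSet_irreducible (hw i), hf]]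
    simp [A]
  have hcu : ¬ IsUnit c := fun h => hau j₀ (hcT j₀ hj₀ ▸ (coprod_isUnit_iff c).1 h j₀)
  refine ⟨c, ((isBFMonoid_coprod hbf).elasticity_eq_iff hcu).2 ?_⟩
  rw [sSup_lengthSet_coprod hbf hS, sInf_lengthSet_coprod hbf hS, sum_union hTA, sum_union hTA,
    hsumT sSup, hsumT sInf, hsumA sSup (csSup_singleton 1), hsumA sInf (csInf_singleton 1)]
  exact_mod_cast hs

/-- The coproduct of a family `(H_i)_{i ∈ ℕ}` of BF-monoids all having
the same elasticity `r` is fully elastic. -/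
theorem statement14 (H : ℕ → Type*) [∀ i, CancelCommMonoid (H i)]
    (hbf : ∀ i, IsBFMonoid (H i)) (r : EReal) (hr : ∀ i, monoidElasticity (H i) = r)
    (q : ℚ) (h1 : 1 < q)
    (h2 : ((q : ℝ) : EReal) < monoidElasticity (coprodSubmonoid H)) :
    ∃ a : coprodSubmonoid H, elasticity (coprodSubmonoid H) a = (q : ℝ) := by
  obtain ⟨c, hc⟩ := lt_monoidElasticity_iff.1 h2
  obtain ⟨i, hi⟩ := exists_lt_elasticity_apply hbf (by exact_mod_cast h1.le) hc
  refine exists_elasticity_eq_of_forall_exists_lt hbf h1 fun j => lt_monoidElasticity_iff.1 ?_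
  rw [hr j, ← hr i]
  exact lt_monoidElasticity_iff.2 ⟨_, hi⟩
end

section
/- Let H be a strongly primary monoid that is not half-factorial. Then for every nonunit a ∈ H the limit ρ̄(a) = lim_{n→∞} ρ(a^n) exists and equals ρ(H); that is, R̄(H) = {ρ(H)}. In particular, H is asymptotic fully elastic. -/
/-!
In a strongly primary monoid a nonunit `x` divides every product of `C` nonunits, for some `C`,
and splitting `x` off `y` lowers `min L(y)` by at most `min L(x)`. Hence `x ^ σ ∣ y` whenever
`σ · min L(x) + C ≤ min L(y)`, so that `max L(y) ≥ σ · max L(x)`; this gives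
`max L(x) · min L(y) ≤ min L(x) · max L(y) + K` for all `y`, with `K` depending only on `x`.
Take `y = aⁿ`. If `min L(aⁿ)` is large, `ρ(aⁿ)` is almost at least `ρ(x)`; if it is small, then
`ρ(aⁿ) ≥ n / min L(aⁿ)` is large, because `max L(aⁿ) ≥ n`. So `liminf ρ(aⁿ) ≥ ρ(x)` for every `x`,
while `ρ(aⁿ) ≤ ρ(H)` by definition, and therefore `ρ(aⁿ) → ρ(H)`.
-/

open Filter Topology

noncomputable def maxLength {H : Type*} [CommMonoid H] (a : H) : ℕ := sSup (lengthSet H a)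

noncomputable def minLength {H : Type*} [CommMonoid H] (a : H) : ℕ := sInf (lengthSet H a)

section CommMonoid

variable {H : Type*} [CommMonoid H]

/-- Counting factorizations up to associates treats units and nonunits uniformly. -/
theorem mem_lengthSet_iff_associated {a : H} {k : ℕ} :
    k ∈ lengthSet H a ↔
      ∃ l : List H, (∀ x ∈ l, Irreducible x) ∧ l.length = k ∧ Associated l.prod a := by
  by_cases ha : IsUnit a
  · simp only [lengthSet, if_pos ha, Set.mem_singleton_iff]
    constructor
    · rintro rfl
      exact ⟨[], by simp, rfl, (associated_one_iff_isUnit.2 ha).symm⟩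
    · rintro ⟨l, hl, rfl, hla⟩
      rw [List.length_eq_zero_iff, List.eq_nil_iff_forall_not_mem]
      exact fun x hx => (hl x hx).not_isUnit (List.prod_isUnit_iff.1 (hla.isUnit_iff.2 ha) x hx)
  · simp only [lengthSet, if_neg ha, Set.mem_ofPred_eq]
    constructor
    · rintro ⟨f, hf, rfl⟩
      exact ⟨List.ofFn f, by simpa using hf, by simp, by rw [List.prod_ofFn]⟩
    · rintro ⟨_ | ⟨x, t⟩, hl, rfl, u, rfl⟩
      · exact (ha (by simp)).elim
      -- absorb the unit into the first atom
      have hirr : ∀ y ∈ x * u :: t, Irreducible y := by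
        simp only [List.forall_mem_cons] at hl ⊢
        exact ⟨(irreducible_mul_isUnit u.isUnit).2 hl.1, hl.2⟩
      refine ⟨(x * u :: t).get, fun i => hirr _ (List.get_mem (x * u :: t) i), ?_⟩
      rw [← List.prod_ofFn, List.ofFn_get]
      simp only [List.prod_cons]
      ac_rfl

theorem add_mem_lengthSet_mul_s16 {a b : H} {j k : ℕ} (hj : j ∈ lengthSet H a)
    (hk : k ∈ lengthSet H b) : j + k ∈ lengthSet H (a * b) := by
  obtain ⟨l, hl, rfl, hla⟩ := mem_lengthSet_iff_associated.1 hj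
  obtain ⟨m, hm, rfl, hmb⟩ := mem_lengthSet_iff_associated.1 hk
  refine mem_lengthSet_iff_associated.2 ⟨l ++ m, ?_, List.length_append, ?_⟩
  · simpa [or_imp, forall_and] using ⟨hl, hm⟩
  · simpa [List.prod_append] using hla.mul_mul hmb

theorem minLength_le {a : H} {k : ℕ} (hk : k ∈ lengthSet H a) : minLength a ≤ k :=
  Nat.sInf_le hk

theorem minLength_pos {a : H} (ha : ¬IsUnit a) (hne : (lengthSet H a).Nonempty) :
    0 < minLength a := by
  refine Nat.pos_of_ne_zero fun h0 => ha ?_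
  have h0mem : 0 ∈ lengthSet H a := h0 ▸ Nat.sInf_mem hne
  obtain ⟨l, -, hl, hla⟩ := mem_lengthSet_iff_associated.1 h0mem
  rw [List.length_eq_zero_iff] at hl
  subst hl
  exact associated_one_iff_isUnit.1 hla.symm

theorem elasticity_eq_div {a : H} (ha : ¬IsUnit a) :
    elasticity H a = (maxLength a : ℝ) / minLength a := by
  simp [elasticity, ha, maxLength, minLength]

end CommMonoid

namespace StronglyPrimary

variable {H : Type*} [CancelCommMonoid H]

theorem exists_dvd_list_prod (hsp : StronglyPrimary H) {a : H} (ha : ¬IsUnit a) :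
    ∃ n : ℕ, ∀ l : List H, (∀ x ∈ l, ¬IsUnit x) → n ≤ l.length → a ∣ l.prod := by
  obtain ⟨n, -, hn⟩ := hsp.2 a ha
  refine ⟨n, fun l hl hlen => ?_⟩
  have htake : List.ofFn (fun i : Fin n => l[i]) = l.take n :=
    List.ext_getElem (by simp [hlen]) (by simp)
  have := hn (fun i => l[i]) fun i => hl _ (List.getElem_mem _)
  rw [← List.prod_ofFn, htake] at this
  exact this.trans (List.take_sublist n l).prod_dvd_prod

theorem exists_length_le_of_prod_dvd (hsp : StronglyPrimary H) {a : H} (ha : ¬IsUnit a) :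
    ∃ N : ℕ, ∀ l : List H, (∀ x ∈ l, ¬IsUnit x) → l.prod ∣ a → l.length ≤ N := by
  obtain ⟨n, hn⟩ := hsp.exists_dvd_list_prod ha
  refine ⟨n, fun l hl ⟨e, he⟩ => ?_⟩
  by_contra! hlen
  obtain ⟨c, hc⟩ := hn (l.take n) (fun x hx => hl x (List.mem_of_mem_take hx)) (by simp; omega)
  -- `a ∣ take` and `take * drop ∣ a` force `drop` to be a unit
  have hdrop : IsUnit (l.drop n).prod := by
    refine isUnit_of_dvd_one ⟨c * e, mul_left_cancel (a := a) ?_⟩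
    calc a * 1 = l.prod * e := by rw [mul_one, ← he]
      _ = a * c * (l.drop n).prod * e := by rw [← hc, List.prod_take_mul_prod_drop]
      _ = a * ((l.drop n).prod * (c * e)) := by ac_rfl
  obtain ⟨x, hx⟩ := List.exists_mem_of_ne_nil (l.drop n) (by simp; omega)
  exact hl x (List.mem_of_mem_drop hx) (List.prod_isUnit_iff.1 hdrop x hx)

/-- Splitting a factor into two nonunits lengthens a factorization, so a longest factorization
into nonunits is one into atoms. -/
theorem exists_list_irreducible_prod_eq (hsp : StronglyPrimary H) {a : H} (ha : ¬IsUnit a) :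
    ∃ l : List H, (∀ x ∈ l, Irreducible x) ∧ l.prod = a := by
  obtain ⟨N, hN⟩ := hsp.exists_length_le_of_prod_dvd ha
  let K := {k : ℕ | ∃ l : List H, (∀ x ∈ l, ¬IsUnit x) ∧ l.length = k ∧ l.prod = a}
  have hK : BddAbove K := ⟨N, by rintro _ ⟨l, hl, rfl, rfl⟩; exact hN l hl dvd_rfl⟩
  obtain ⟨l, hl, hlen, rfl⟩ : sSup K ∈ K :=
    Nat.sSup_mem ⟨1, [a], by simpa using ha, rfl, by simp⟩ hK
  refine ⟨l, fun x hx => ⟨hl x hx, fun u v hxuv => ?_⟩, rfl⟩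
  by_contra! huv
  obtain ⟨s, t, rfl⟩ := List.append_of_mem hx
  have hlonger : sSup K + 1 ∈ K := by
    refine ⟨s ++ u :: v :: t, ?_, by simp at hlen ⊢; omega, by simp [hxuv, mul_assoc]⟩
    simp only [List.mem_append, List.mem_cons] at hl ⊢
    rintro y (hy | rfl | rfl | hy)
    exacts [hl y (Or.inl hy), huv.1, huv.2, hl y (Or.inr (Or.inr hy))]
  have := le_csSup hK hlonger
  omega

theorem lengthSet_nonempty (hsp : StronglyPrimary H) (a : H) : (lengthSet H a).Nonempty := by
  by_cases ha : IsUnit a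
  · exact ⟨0, by simp [lengthSet, ha]⟩
  obtain ⟨l, hl, rfl⟩ := hsp.exists_list_irreducible_prod_eq ha
  exact ⟨l.length, mem_lengthSet_iff_associated.2 ⟨l, hl, rfl, Associated.refl _⟩⟩

theorem lengthSet_bddAbove (hsp : StronglyPrimary H) (a : H) : BddAbove (lengthSet H a) := by
  by_cases ha : IsUnit a
  · simp [lengthSet, ha]
  obtain ⟨N, hN⟩ := hsp.exists_length_le_of_prod_dvd ha
  refine ⟨N, fun k hk => ?_⟩
  obtain ⟨l, hl, rfl, hla⟩ := mem_lengthSet_iff_associated.1 hk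
  exact hN l (fun x hx => (hl x hx).not_isUnit) hla.dvd

theorem maxLength_mem (hsp : StronglyPrimary H) (a : H) : maxLength a ∈ lengthSet H a :=
  Nat.sSup_mem (hsp.lengthSet_nonempty a) (hsp.lengthSet_bddAbove a)

theorem minLength_mem (hsp : StronglyPrimary H) (a : H) : minLength a ∈ lengthSet H a :=
  Nat.sInf_mem (hsp.lengthSet_nonempty a)

theorem minLength_le_maxLength (hsp : StronglyPrimary H) (a : H) :
    minLength a ≤ maxLength a :=
  minLength_le (hsp.maxLength_mem a)

theorem maxLength_add_le (hsp : StronglyPrimary H) (a b : H) :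
    maxLength a + maxLength b ≤ maxLength (a * b) :=
  le_csSup (hsp.lengthSet_bddAbove _)
    (add_mem_lengthSet_mul_s16 (hsp.maxLength_mem a) (hsp.maxLength_mem b))

theorem minLength_mul_le (hsp : StronglyPrimary H) (a b : H) :
    minLength (a * b) ≤ minLength a + minLength b :=
  minLength_le (add_mem_lengthSet_mul_s16 (hsp.minLength_mem a) (hsp.minLength_mem b))

theorem maxLength_le_of_dvd (hsp : StronglyPrimary H) {a b : H} (h : a ∣ b) :
    maxLength a ≤ maxLength b := by
  obtain ⟨c, rfl⟩ := h
  exact (Nat.le_add_right _ _).trans (hsp.maxLength_add_le a c)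

theorem mul_maxLength_le_maxLength_pow (hsp : StronglyPrimary H) (a : H) (n : ℕ) :
    n * maxLength a ≤ maxLength (a ^ n) := by
  induction n with
  | zero => simp
  | succ n ih =>
    rw [pow_succ, Nat.succ_mul]
    exact (Nat.add_le_add_right ih _).trans (hsp.maxLength_add_le _ _)

theorem le_maxLength_pow (hsp : StronglyPrimary H) {a : H} (ha : ¬IsUnit a) (n : ℕ) :
    n ≤ maxLength (a ^ n) := by
  have h1 : 1 ≤ maxLength a :=
    (minLength_pos ha (hsp.lengthSet_nonempty a)).trans_le (hsp.minLength_le_maxLength a)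
  calc n ≤ n * maxLength a := Nat.le_mul_of_pos_right n h1
    _ ≤ maxLength (a ^ n) := hsp.mul_maxLength_le_maxLength_pow a n

theorem pow_dvd_of_le_minLength (hsp : StronglyPrimary H) {x : H} {C : ℕ}
    (hC : ∀ l : List H, (∀ u ∈ l, ¬IsUnit u) → C ≤ l.length → x ∣ l.prod) :
    ∀ (σ : ℕ) (y : H), σ * minLength x + C ≤ minLength y → x ^ σ ∣ y
  | 0, y, _ => by simp
  | σ + 1, y, hy => by
    obtain ⟨l, hl, hlen, hly⟩ := mem_lengthSet_iff_associated.1 (hsp.minLength_mem y)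
    obtain ⟨z, rfl⟩ : x ∣ y :=
      (hC l (fun u hu => (hl u hu).not_isUnit) (by rw [hlen, add_mul] at *; omega)).trans hly.dvd
    have := hsp.minLength_mul_le x z
    rw [pow_succ']
    exact mul_dvd_mul_left x
      (pow_dvd_of_le_minLength hsp hC σ z (by rw [add_mul, one_mul] at hy; omega))

theorem exists_maxLength_mul_minLength_le (hsp : StronglyPrimary H) {x : H}
    (hx : ¬IsUnit x) :
    ∃ K : ℕ, ∀ y : H, maxLength x * minLength y ≤ minLength x * maxLength y + K := by
  obtain ⟨C, hC⟩ := hsp.exists_dvd_list_prod hx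
  refine ⟨(minLength x + C) * maxLength x, fun y => ?_⟩
  by_cases hyC : minLength y < C
  · nlinarith
  have hle := Nat.div_mul_le_self (minLength y - C) (minLength x)
  have hlt := Nat.lt_div_mul_add (a := minLength y - C)
    (minLength_pos hx (hsp.lengthSet_nonempty x))
  generalize (minLength y - C) / minLength x = σ at hle hlt
  have hmax : σ * maxLength x ≤ maxLength y :=
    (hsp.mul_maxLength_le_maxLength_pow x σ).trans
      (hsp.maxLength_le_of_dvd (hsp.pow_dvd_of_le_minLength hC σ y (by omega)))
  have hmin : minLength y ≤ (σ + 1) * minLength x + C := by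
    rw [add_mul, one_mul]
    omega
  calc maxLength x * minLength y ≤ maxLength x * ((σ + 1) * minLength x + C) := by gcongr
    _ = minLength x * (σ * maxLength x) + (minLength x + C) * maxLength x := by ring
    _ ≤ minLength x * maxLength y + (minLength x + C) * maxLength x := by gcongr

theorem one_le_elasticity (hsp : StronglyPrimary H) (a : H) :
    1 ≤ elasticity H a := by
  by_cases ha : IsUnit a
  · simp [elasticity, ha]
  have hpos : (0 : ℝ) < minLength a := by
    exact_mod_cast minLength_pos ha (hsp.lengthSet_nonempty a)
  rw [elasticity_eq_div ha, one_le_div hpos]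
  exact_mod_cast hsp.minLength_le_maxLength a

theorem eventually_lt_elasticity_pow (hsp : StronglyPrimary H) {a x : H}
    (ha : ¬IsUnit a) (hx : ¬IsUnit x) {s : ℝ} (hs : s < elasticity H x) :
    ∀ᶠ n : ℕ in atTop, s < elasticity H (a ^ n) := by
  obtain ⟨K, hK⟩ := hsp.exists_maxLength_mul_minLength_le hx
  have hq : (0 : ℝ) < minLength x := by exact_mod_cast minLength_pos hx (hsp.lengthSet_nonempty x)
  rw [elasticity_eq_div hx, lt_div_iff₀ hq] at hs
  set δ : ℝ := maxLength x - s * minLength x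
  filter_upwards [eventually_gt_atTop 0,
    tendsto_natCast_atTop_atTop.eventually_gt_atTop (s * K / δ)] with n hn hnK
  have han : ¬IsUnit (a ^ n) := fun h => ha ((isUnit_pow_iff hn.ne').1 h)
  have hm : (1 : ℝ) ≤ minLength (a ^ n) := by
    exact_mod_cast minLength_pos han (hsp.lengthSet_nonempty _)
  have hM : (n : ℝ) ≤ maxLength (a ^ n) := by exact_mod_cast hsp.le_maxLength_pow ha n
  have hKy : (maxLength x : ℝ) * minLength (a ^ n) ≤ minLength x * maxLength (a ^ n) + K := by
    exact_mod_cast hK (a ^ n)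
  rw [elasticity_eq_div han, lt_div_iff₀ (by linarith)]
  rw [div_lt_iff₀ (by linarith)] at hnK
  have hδ : 0 < δ := by linarith
  rcases lt_or_ge (K : ℝ) (δ * minLength (a ^ n)) with hlarge | hsmall
  · nlinarith
  · nlinarith

theorem tendsto_elasticity_pow (hsp : StronglyPrimary H) {a : H}
    (ha : ¬IsUnit a) :
    Tendsto (fun n : ℕ => ((elasticity H (a ^ n) : ℝ) : EReal)) atTop
      (𝓝 (monoidElasticity H)) := by
  refine tendsto_order.2 ⟨fun t ht => ?_, fun t ht => .of_forall fun n =>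
    (le_iSup (fun x : H => ((elasticity H x : ℝ) : EReal)) (a ^ n)).trans_lt ht⟩
  obtain ⟨x, hx⟩ := lt_iSup_iff.1 ht
  by_cases hxu : IsUnit x
  · rw [show elasticity H x = 1 by simp [elasticity, hxu]] at hx
    exact .of_forall fun n => hx.trans_le (EReal.coe_le_coe_iff.2 (hsp.one_le_elasticity _))
  obtain ⟨s, hts, hs⟩ := EReal.lt_iff_exists_real_btwn.1 hx
  filter_upwards [hsp.eventually_lt_elasticity_pow ha hxu (EReal.coe_lt_coe_iff.1 hs)] with n hn
  exact hts.trans (EReal.coe_lt_coe_iff.2 hn)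

end StronglyPrimary

theorem statement16_general (H : Type*) [CancelCommMonoid H]
    (hsp : StronglyPrimary H) :
    (∀ a : H, ¬ IsUnit a →
      Tendsto (fun n : ℕ => ((elasticity H (a ^ n) : ℝ) : EReal)) atTop
        (nhds (monoidElasticity H))) ∧
    asympSet H = {monoidElasticity H} := by
  refine ⟨fun a ha => hsp.tendsto_elasticity_pow ha, Set.eq_singleton_iff_unique_mem.2 ⟨?_, ?_⟩⟩
  · obtain ⟨a, ha⟩ := hsp.1
    exact ⟨a, ha, hsp.tendsto_elasticity_pow ha⟩
  · rintro r ⟨a, ha, hr⟩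
    exact tendsto_nhds_unique hr (hsp.tendsto_elasticity_pow ha)

/-- If `H` is strongly primary and not half-factorial, then for
every nonunit `a ∈ H` the limit `ρ̄(a) = lim ρ(aⁿ)` exists and equals `ρ(H)`;
that is, `R̄(H) = {ρ(H)}`. -/
theorem statement16 (H : Type*) [CancelCommMonoid H]
    (hsp : StronglyPrimary H) (hhf : ¬ IsHalfFactorial H) :
    (∀ a : H, ¬ IsUnit a →
      Tendsto (fun n : ℕ => ((elasticity H (a ^ n) : ℝ) : EReal)) atTop
        (nhds (monoidElasticity H))) ∧
    asympSet H = {monoidElasticity H} :=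
  statement16_general H hsp
end
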